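/- Let N, d be positive integers and let U be a unitary matrix indexed by Fin N × Fin d. Then the Environment Algebra A(U) is commutative (∀ a b ∈ A(U), a*b = b*a) if and only if there exist a positive integer m, matrices P₁, …, P_m : Matrix (Fin d) (Fin d) ℂ which are nonzero orthogonal projections (P_iᴴ = P_i, P_i*P_i = P_i), mutually orthogonal (P_i*P_j = 0 for i ≠ j), summing to the identity (∑ P_i = 1), and unitary matrices V₁, …, V_m : Matrix (Fin N) (Fin N) ℂ, such that U = ∑_{i=1}^m V_i ⊗ P_i. -/

import Mathlib

open scoped Kronecker
open Matrix

/-- The slice `M(f,g)` of an operator on `ℂ^N ⊗ ℂ^d`: the partial trace `Tr_{|g⟩⟨f|}[M]`,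
given by `M(f,g) k l = ∑ i j, conj (f i) * g j * M (i,k) (j,l)`. -/
noncomputable def envSlice {N d : ℕ} (M : Matrix (Fin N × Fin d) (Fin N × Fin d) ℂ)
    (f g : Fin N → ℂ) : Matrix (Fin d) (Fin d) ℂ :=
  Matrix.of fun k l => ∑ i, ∑ j, (starRingEnd ℂ) (f i) * g j * M (i, k) (j, l)

/-- The Environment Algebra `A(U)`: the unital star-subalgebra generated by all slices
`U(f,g)` and `Uᴴ(f,g)`. -/
noncomputable def envAlg {N d : ℕ} (U : Matrix (Fin N × Fin d) (Fin N × Fin d) ℂ) :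
    StarSubalgebra ℂ (Matrix (Fin d) (Fin d) ℂ) :=
  StarAlgebra.adjoin ℂ
    ({A | ∃ f g, A = envSlice U f g} ∪ {A | ∃ f g, A = envSlice Uᴴ f g})

/-- The Environment Right-Action Algebra `A_r(U)`: the unital star-subalgebra generated by all
products `Uᴴ(f₁,g₁) * U(f₂,g₂)`. -/
noncomputable def envActAlg {N d : ℕ} (U : Matrix (Fin N × Fin d) (Fin N × Fin d) ℂ) :
    StarSubalgebra ℂ (Matrix (Fin d) (Fin d) ℂ) :=
  StarAlgebra.adjoin ℂ
    {A | ∃ f₁ g₁ f₂ g₂, A = envSlice Uᴴ f₁ g₁ * envSlice U f₂ g₂}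

/-! If `U = ∑ i, Vᵢ ⊗ Pᵢ`, every slice of `U` and of `Uᴴ` is a linear combination of the `Pᵢ`, so
`A(U)` lies in the commutative star algebra generated by the `Pᵢ`. Conversely, if `A(U)` is
commutative, its self-adjoint elements are commuting Hermitian operators, hence simultaneously
diagonalizable: the projections `Pᵢ` onto the nonzero joint eigenspaces form a complete orthogonal
family and every element of `A(U)` is a combination `∑ cᵢ • Pᵢ`. The slices `U(eₐ, e_b)` carry the
entries of `U`, so `U = ∑ Vᵢ ⊗ Pᵢ`, and `V ↦ ∑ Vᵢ ⊗ Pᵢ` is an injective unital ring homomorphism,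
so the `Vᵢ` inherit unitarity from `U`. -/

universe u

section JointEigenspaces

open Module.End

variable {E : Type u} [NormedAddCommGroup E] [InnerProductSpace ℂ E] [FiniteDimensional ℂ E]

def jointEigenspace (S : StarSubalgebra ℂ (E →L[ℂ] E))
    (χ : {T // T ∈ S ∧ IsSelfAdjoint T} → ℂ) : Submodule ℂ E :=
  ⨅ T, eigenspace (T.1 : E →ₗ[ℂ] E) (χ T)

variable {S : StarSubalgebra ℂ (E →L[ℂ] E)}

lemma isSymmetric_of_selfAdjoint (T : {T // T ∈ S ∧ IsSelfAdjoint T}) :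
    (T.1 : E →ₗ[ℂ] E).IsSymmetric :=
  ContinuousLinearMap.isSelfAdjoint_iff_isSymmetric.mp T.2.2

lemma orthogonalFamily_jointEigenspace :
    OrthogonalFamily ℂ (fun χ ↦ jointEigenspace S χ) fun χ ↦ (jointEigenspace S χ).subtypeₗᵢ :=
  LinearMap.IsSymmetric.orthogonalFamily_iInf_eigenspaces isSymmetric_of_selfAdjoint

lemma iSup_jointEigenspace_eq_top (hS : ∀ a ∈ S, ∀ b ∈ S, a * b = b * a) :
    ⨆ χ, jointEigenspace S χ = ⊤ :=
  LinearMap.IsSymmetric.iSup_iInf_eq_top_of_commute isSymmetric_of_selfAdjoint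
    fun T T' _ ↦ congrArg ContinuousLinearMap.toLinearMap (hS _ T.2.1 _ T'.2.1)

lemma exists_apply_eq_smul_of_mem_jointEigenspace {a : E →L[ℂ] E} (ha : a ∈ S)
    (χ : {T // T ∈ S ∧ IsSelfAdjoint T} → ℂ) :
    ∃ c : ℂ, ∀ v ∈ jointEigenspace S χ, a v = c • v := by
  have hre : (realPart a : E →L[ℂ] E) ∈ S := by
    rw [realPart_apply_coe]
    exact S.smul_mem (add_mem ha (star_mem ha)) _
  have him : (imaginaryPart a : E →L[ℂ] E) ∈ S := by
    rw [imaginaryPart_apply_coe]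
    exact S.smul_mem (S.smul_mem (sub_mem ha (star_mem ha)) _) _
  set re : {T // T ∈ S ∧ IsSelfAdjoint T} := ⟨realPart a, hre, (realPart a).2⟩
  set im : {T // T ∈ S ∧ IsSelfAdjoint T} := ⟨imaginaryPart a, him, (imaginaryPart a).2⟩
  refine ⟨χ re + Complex.I * χ im, fun v hv ↦ ?_⟩
  have eigen (T) : T.1 v = χ T • v := mem_eigenspace_iff.mp ((Submodule.mem_iInf _).mp hv T)
  conv_lhs => rw [← realPart_add_I_smul_imaginaryPart a]
  rw [_root_.add_apply, _root_.smul_apply, eigen re, eigen im,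
    smul_smul, ← add_smul]

theorem ContinuousLinearMap.exists_completeOrthogonalIdempotents_span_of_commute
    (hS : ∀ a ∈ S, ∀ b ∈ S, a * b = b * a) :
    ∃ (ι : Type u) (_ : Fintype ι) (Q : ι → E →L[ℂ] E), CompleteOrthogonalIdempotents Q ∧
      (∀ i, IsSelfAdjoint (Q i)) ∧ (∀ i, Q i ≠ 0) ∧
      ∀ a ∈ S, a ∈ Submodule.span ℂ (Set.range Q) := by
  classical
  have hW := orthogonalFamily_jointEigenspace (S := S)
  have : Finite {χ // jointEigenspace S χ ≠ ⊥} :=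
    Submodule.finite_ne_bot_of_iSupIndep hW.independent
  have := Fintype.ofFinite {χ // jointEigenspace S χ ≠ ⊥}
  set Q : {χ // jointEigenspace S χ ≠ ⊥} → E →L[ℂ] E :=
    fun χ ↦ (jointEigenspace S χ).starProjection
  have hcomplete : ∑ χ, Q χ = 1 := by
    ext v
    rw [_root_.sum_apply]
    refine (hW.comp Subtype.val_injective).sum_projection_of_mem_iSup v ?_
    rw [iSup_ne_bot_subtype, iSup_jointEigenspace_eq_top hS]
    trivial
  have hQ : CompleteOrthogonalIdempotents Q :=
    ⟨⟨fun χ ↦ Submodule.isIdempotentElem_starProjection _, fun χ χ' h ↦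
      (hW.isOrtho (Subtype.val_injective.ne h)).starProjection_comp_starProjection⟩, hcomplete⟩
  refine ⟨_, inferInstance, Q, hQ, fun χ ↦ isSelfAdjoint_starProjection _, fun χ ↦ ?_,
    fun a ha ↦ ?_⟩
  · obtain ⟨v, hv, hv0⟩ := (Submodule.ne_bot_iff _).mp χ.2
    refine fun h ↦ hv0 ?_
    rw [← Submodule.starProjection_eq_self_iff.mpr hv]
    exact DFunLike.congr_fun h v
  · rw [← mul_one a, ← hcomplete, Finset.mul_sum]
    refine Submodule.sum_mem _ fun χ _ ↦ ?_
    obtain ⟨c, hc⟩ := exists_apply_eq_smul_of_mem_jointEigenspace ha χ.1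
    have : a * Q χ = c • Q χ :=
      ContinuousLinearMap.ext fun v ↦ hc _ (Submodule.starProjection_apply_mem _ v)
    rw [this]
    exact Submodule.smul_mem _ _ (Submodule.subset_span ⟨χ, rfl⟩)

end JointEigenspaces

theorem Matrix.exists_completeOrthogonalIdempotents_span_of_commute {n : Type u} [Fintype n]
    [DecidableEq n] {S : StarSubalgebra ℂ (Matrix n n ℂ)}
    (hS : ∀ a ∈ S, ∀ b ∈ S, a * b = b * a) :
    ∃ (m : ℕ) (P : Fin m → Matrix n n ℂ), CompleteOrthogonalIdempotents P ∧
      (∀ i, (P i).IsHermitian) ∧ (∀ i, P i ≠ 0) ∧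
      ∀ a ∈ S, a ∈ Submodule.span ℂ (Set.range P) := by
  set f : Matrix n n ℂ ≃⋆ₐ[ℂ] _ := Matrix.toEuclideanCLM
  have hS' : ∀ a ∈ S.map f.toStarAlgHom, ∀ b ∈ S.map f.toStarAlgHom, a * b = b * a := by
    rintro _ ⟨a, ha, rfl⟩ _ ⟨b, hb, rfl⟩
    simp only [← map_mul, hS a ha b hb]
  obtain ⟨ι, _, Q, hQ, hQ_sa, hQ_ne, hQ_span⟩ :=
    ContinuousLinearMap.exists_completeOrthogonalIdempotents_span_of_commute hS'
  set e := (Fintype.equivFin ι).symm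
  set g := f.symm.toStarAlgHom
  refine ⟨Fintype.card ι, g ∘ Q ∘ e, (CompleteOrthogonalIdempotents.equiv e).mpr
    (hQ.map (RingHomClass.toRingHom g)), fun i ↦ ((hQ_sa _).map g).isHermitian,
    fun i ↦ (map_ne_zero_iff _ f.symm.injective).mpr (hQ_ne _), fun a ha ↦ ?_⟩
  have := Submodule.apply_mem_span_image_of_mem_span (g : _ →ₗ[ℂ] Matrix n n ℂ)
    (hQ_span (f a) ⟨a, ha, rfl⟩)
  rwa [← Set.range_comp, ← e.surjective.range_comp,
    show (g : _ →ₗ[ℂ] Matrix n n ℂ) (f a) = a from f.symm_apply_apply a] at this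

namespace Matrix

section SumKronecker

variable {ι l m n p R : Type*} [Fintype ι]

lemma kronecker_sum [NonUnitalNonAssocSemiring R] (A : Matrix l m R) (B : ι → Matrix n p R) :
    A ⊗ₖ ∑ i, B i = ∑ i, A ⊗ₖ B i := by
  ext ⟨a, k⟩ ⟨b, k'⟩
  simp [kroneckerMap_apply, sum_apply, Finset.mul_sum]

lemma kronecker_left_cancel [CommRing R] [IsDomain R] {A B : Matrix l m R} {C : Matrix n p R}
    (hC : C ≠ 0) (h : A ⊗ₖ C = B ⊗ₖ C) : A = B := by
  obtain ⟨k, k', hk⟩ : ∃ k k', C k k' ≠ 0 := by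
    by_contra! hC'
    exact hC (Matrix.ext hC')
  ext a b
  simpa [kroneckerMap_apply, hk] using congrFun (congrFun h (a, k)) (b, k')

lemma conjTranspose_sum_kronecker [CommRing R] [StarRing R] {P : ι → Matrix n n R}
    (hP : ∀ i, (P i).IsHermitian) (V : ι → Matrix l m R) :
    (∑ i, V i ⊗ₖ P i)ᴴ = ∑ i, (V i)ᴴ ⊗ₖ P i := by
  simp only [conjTranspose_sum, conjTranspose_kronecker, fun i ↦ (hP i).eq]

variable [Fintype m] [Fintype n] [DecidableEq n] [CommRing R] {P : ι → Matrix n n R}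

lemma sum_kronecker_mul_kronecker (hP : OrthogonalIdempotents P) (A : ι → Matrix m m R)
    (B : Matrix m m R) (j : ι) :
    (∑ i, A i ⊗ₖ P i) * (B ⊗ₖ P j) = (A j * B) ⊗ₖ P j := by
  classical
  simp [Finset.sum_mul, ← mul_kronecker_mul, hP.mul_eq, apply_ite]

lemma sum_kronecker_mul_sum_kronecker (hP : OrthogonalIdempotents P) (A B : ι → Matrix m m R) :
    (∑ i, A i ⊗ₖ P i) * (∑ i, B i ⊗ₖ P i) = ∑ i, (A i * B i) ⊗ₖ P i := by
  simp only [Finset.mul_sum, sum_kronecker_mul_kronecker hP]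

lemma sum_kronecker_injective [DecidableEq m] [IsDomain R] (hP : OrthogonalIdempotents P)
    (hP0 : ∀ i, P i ≠ 0) {A B : ι → Matrix m m R}
    (h : ∑ i, A i ⊗ₖ P i = ∑ i, B i ⊗ₖ P i) : A = B := by
  funext j
  refine kronecker_left_cancel (hP0 j) ?_
  have := congrArg (· * (1 ⊗ₖ P j)) h
  simpa only [sum_kronecker_mul_kronecker hP, mul_one] using this

lemma mem_unitary_of_sum_kronecker_mem_unitary [DecidableEq m] [IsDomain R] [StarRing R]
    (hP : CompleteOrthogonalIdempotents P) (hP_herm : ∀ i, (P i).IsHermitian) (hP0 : ∀ i, P i ≠ 0)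
    {V : ι → Matrix m m R} (hV : ∑ i, V i ⊗ₖ P i ∈ unitary (Matrix (m × n) (m × n) R)) (i : ι) :
    V i ∈ unitary (Matrix m m R) := by
  have hone : (1 : Matrix (m × n) (m × n) R) = ∑ i, 1 ⊗ₖ P i := by
    rw [← kronecker_sum, hP.complete, one_kronecker_one]
  have cancel {A B : ι → Matrix m m R} (h : (∑ i, A i ⊗ₖ P i) * ∑ i, B i ⊗ₖ P i = 1) :
      A i * B i = 1 := by
    have h' : ∑ i, (A i * B i) ⊗ₖ P i = ∑ i, 1 ⊗ₖ P i := by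
      rw [← sum_kronecker_mul_sum_kronecker hP.toOrthogonalIdempotents, h, hone]
    exact congrFun (sum_kronecker_injective hP.toOrthogonalIdempotents hP0 h') i
  rw [Unitary.mem_iff, star_eq_conjTranspose, conjTranspose_sum_kronecker hP_herm] at hV
  exact Unitary.mem_iff.mpr ⟨cancel hV.1, cancel hV.2⟩

end SumKronecker

end Matrix

section EnvironmentAlgebra

variable {N d : ℕ}

lemma envSlice_single (M : Matrix (Fin N × Fin d) (Fin N × Fin d) ℂ) (a b : Fin N) (k l : Fin d) :
    envSlice M (Pi.single a 1) (Pi.single b 1) k l = M (a, k) (b, l) := by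
  simp [envSlice, Pi.single_apply, apply_ite (starRingEnd ℂ)]

lemma envSlice_kronecker (A : Matrix (Fin N) (Fin N) ℂ) (B : Matrix (Fin d) (Fin d) ℂ)
    (f g : Fin N → ℂ) : envSlice (A ⊗ₖ B) f g = (star f ⬝ᵥ A *ᵥ g) • B := by
  ext k l
  simp only [envSlice, of_apply, kroneckerMap_apply, Matrix.smul_apply, smul_eq_mul, dotProduct,
    mulVec, Finset.sum_mul, Finset.mul_sum, Pi.star_apply, RCLike.star_def]
  exact Finset.sum_congr rfl fun _ _ ↦ Finset.sum_congr rfl fun _ _ ↦ by ring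

lemma envSlice_sum {ι : Type*} [Fintype ι] (M : ι → Matrix (Fin N × Fin d) (Fin N × Fin d) ℂ)
    (f g : Fin N → ℂ) : envSlice (∑ i, M i) f g = ∑ i, envSlice (M i) f g := by
  ext k l
  simp only [envSlice, of_apply, Matrix.sum_apply, Finset.mul_sum]
  exact (Finset.sum_congr rfl fun _ _ ↦ Finset.sum_comm).trans Finset.sum_comm

lemma envSlice_mem_envAlg (U : Matrix (Fin N × Fin d) (Fin N × Fin d) ℂ) (f g : Fin N → ℂ) :
    envSlice U f g ∈ envAlg U :=
  StarAlgebra.subset_adjoin ℂ _ (Or.inl ⟨f, g, rfl⟩)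

lemma exists_eq_sum_kronecker_of_envSlice_mem_span {ι : Type*} [Fintype ι]
    {M : Matrix (Fin N × Fin d) (Fin N × Fin d) ℂ} {P : ι → Matrix (Fin d) (Fin d) ℂ}
    (h : ∀ f g, envSlice M f g ∈ Submodule.span ℂ (Set.range P)) :
    ∃ V : ι → Matrix (Fin N) (Fin N) ℂ, M = ∑ i, V i ⊗ₖ P i := by
  choose c hc using fun a b : Fin N ↦
    (Submodule.mem_span_range_iff_exists_fun ℂ).mp (h (Pi.single a 1) (Pi.single b 1))
  refine ⟨fun i ↦ of fun a b ↦ c a b i, ?_⟩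
  ext ⟨a, k⟩ ⟨b, l⟩
  rw [← envSlice_single M a b k l, ← hc a b]
  simp [Matrix.sum_apply, kroneckerMap_apply]

theorem mul_comm_of_mem_envAlg_sum_kronecker {ι : Type*} [Fintype ι]
    {P : ι → Matrix (Fin d) (Fin d) ℂ} (V : ι → Matrix (Fin N) (Fin N) ℂ)
    (hP_comm : Pairwise fun i j ↦ Commute (P i) (P j)) (hP_herm : ∀ i, (P i).IsHermitian) :
    ∀ a ∈ envAlg (∑ i, V i ⊗ₖ P i), ∀ b ∈ envAlg (∑ i, V i ⊗ₖ P i), a * b = b * a := by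
  have hslice (W : ι → Matrix (Fin N) (Fin N) ℂ) (f g : Fin N → ℂ) :
      envSlice (∑ i, W i ⊗ₖ P i) f g ∈ StarAlgebra.adjoin ℂ (Set.range P) := by
    simp only [envSlice_sum, envSlice_kronecker]
    exact sum_mem fun i _ ↦ SMulMemClass.smul_mem _ (StarAlgebra.subset_adjoin ℂ _ ⟨i, rfl⟩)
  have hle : envAlg (∑ i, V i ⊗ₖ P i) ≤ StarAlgebra.adjoin ℂ (Set.range P) :=
    StarAlgebra.adjoin_le <| by
      rintro _ (⟨f, g, rfl⟩ | ⟨f, g, rfl⟩)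
      · exact hslice V f g
      · rw [conjTranspose_sum_kronecker hP_herm]
        exact hslice _ f g
  have hcomm : ∀ a ∈ Set.range P, ∀ b ∈ Set.range P, a * b = b * a := by
    rintro _ ⟨i, rfl⟩ _ ⟨j, rfl⟩
    rcases eq_or_ne i j with rfl | hij
    exacts [rfl, hP_comm hij]
  have := StarAlgebra.isMulCommutative_adjoin ℂ hcomm <| by
    rintro a ha _ ⟨j, rfl⟩
    rw [star_eq_conjTranspose, (hP_herm j).eq]
    exact hcomm a ha _ ⟨j, rfl⟩
  exact fun a ha b hb ↦ setLike_mul_comm (hle ha) (hle hb)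

end EnvironmentAlgebra

theorem envAlg_commutative_iff_general (N d : ℕ) (hd : 0 < d)
    (U : Matrix (Fin N × Fin d) (Fin N × Fin d) ℂ)
    (hU : Uᴴ * U = 1) (hU' : U * Uᴴ = 1) :
    (∀ a ∈ envAlg U, ∀ b ∈ envAlg U, a * b = b * a) ↔
    ∃ (m : ℕ) (_ : 0 < m) (P : Fin m → Matrix (Fin d) (Fin d) ℂ)
      (V : Fin m → Matrix (Fin N) (Fin N) ℂ),
      (∀ i, P i ≠ 0) ∧
      (∀ i, (P i)ᴴ = P i) ∧
      (∀ i, P i * P i = P i) ∧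
      (∀ i j, i ≠ j → P i * P j = 0) ∧
      (∑ i, P i) = 1 ∧
      (∀ i, (V i)ᴴ * V i = 1 ∧ V i * (V i)ᴴ = 1) ∧
      U = ∑ i, V i ⊗ₖ P i := by
  constructor
  · intro hcomm
    obtain ⟨m, P, hP, hP_herm, hP0, hspan⟩ :=
      Matrix.exists_completeOrthogonalIdempotents_span_of_commute hcomm
    obtain ⟨V, rfl⟩ :=
      exists_eq_sum_kronecker_of_envSlice_mem_span fun f g ↦ hspan _ (envSlice_mem_envAlg _ f g)
    have : Nonempty (Fin d) := ⟨⟨0, hd⟩⟩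
    have hm : 0 < m := Nat.pos_of_ne_zero fun hm ↦ by
      subst hm
      simpa using hP.complete
    have hV :=
      mem_unitary_of_sum_kronecker_mem_unitary hP hP_herm hP0 (Unitary.mem_iff.mpr ⟨hU, hU'⟩)
    exact ⟨m, hm, P, V, hP0, fun i ↦ (hP_herm i).eq, fun i ↦ (hP.idem i).eq,
      fun i j hij ↦ hP.ortho hij, hP.complete, fun i ↦ Unitary.mem_iff.mp (hV i), rfl⟩
  · rintro ⟨m, -, P, V, -, hP_herm, -, hP_orth, -, -, rfl⟩
    exact mul_comm_of_mem_envAlg_sum_kronecker V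
      (fun i j hij ↦ (hP_orth i j hij).trans (hP_orth j i hij.symm).symm) hP_herm

/-- `A(U)` is commutative iff `U = ∑ᵢ Vᵢ ⊗ Pᵢ` for unitaries `Vᵢ` on the system
and a complete family of nonzero mutually orthogonal projections `Pᵢ` of the environment. -/
theorem envAlg_commutative_iff (N d : ℕ) (hN : 0 < N) (hd : 0 < d)
    (U : Matrix (Fin N × Fin d) (Fin N × Fin d) ℂ)
    (hU : Uᴴ * U = 1) (hU' : U * Uᴴ = 1) :
    (∀ a ∈ envAlg U, ∀ b ∈ envAlg U, a * b = b * a) ↔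
    ∃ (m : ℕ) (_ : 0 < m) (P : Fin m → Matrix (Fin d) (Fin d) ℂ)
      (V : Fin m → Matrix (Fin N) (Fin N) ℂ),
      (∀ i, P i ≠ 0) ∧
      (∀ i, (P i)ᴴ = P i) ∧
      (∀ i, P i * P i = P i) ∧
      (∀ i j, i ≠ j → P i * P j = 0) ∧
      (∑ i, P i) = 1 ∧
      (∀ i, (V i)ᴴ * V i = 1 ∧ V i * (V i)ᴴ = 1) ∧
      U = ∑ i, V i ⊗ₖ P i :=
  envAlg_commutative_iff_general N d hd U hU hU'
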